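/- For every cell-centered grid function g on Omega=(0,L)^3 with zero mean there exists a unique zero-mean cell-centered grid function p (with Neumann ghost values) such that -Delta_h p = g at every cell. Moreover, for every MAC vector field f satisfying the no-penetration boundary condition, the cell-centered function div_h f has zero mean, and, letting p be the unique zero-mean solution of -Delta_h p = div_h f, the discrete Helmholtz projection P_H^h f := f + grad_h p satisfies div_h(P_H^h f) = 0 at every cell. -/

import Mathlib

open Finset

noncomputable section

/-! Finite–difference / MAC-grid framework on Ω = (0,L)³ with N cells per
direction and mesh size h = L/N.  A cell-centered grid function is a map
`ℤ → ℤ → ℤ → ℝ` whose meaningful values are at indices in {1,…,N}³; ghost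
values are given by the discrete homogeneous Neumann (reflection) condition,
implemented by clamping indices to {1,…,N}.  The x-component of a MAC vector
field is recorded so that `ux i j k` is the value at the x-face (i+1/2,j,k),
0 ≤ i ≤ N, 1 ≤ j,k ≤ N (analogously for the y,z components), and the
free-slip condition prescribes the tangential ghost values by reflection,
again implemented by clamping the tangential indices. -/

/-- Index clamped into `{1,…,N}`: implements the reflection ghost values. -/
def clampIdx (N : ℕ) (i : ℤ) : ℤ := max 1 (min i (N : ℤ))

/-- Extension of a cell-centered grid function by the discrete homogeneous
Neumann (reflection) ghost values. -/
def nExt (N : ℕ) (φ : ℤ → ℤ → ℤ → ℝ) (i j k : ℤ) : ℝ :=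
  φ (clampIdx N i) (clampIdx N j) (clampIdx N k)

/-- The cell indices `{1,…,N}`. -/
def cellIdx (N : ℕ) : Finset ℤ := Finset.Icc 1 (N : ℤ)

/-- The interior-face indices `{1,…,N-1}`. -/
def faceIdx (N : ℕ) : Finset ℤ := Finset.Icc 1 ((N : ℤ) - 1)

/-- Cell-centered discrete inner product `(φ,ψ) = h³ Σ φψ`. -/
def cip (N : ℕ) (h : ℝ) (φ ψ : ℤ → ℤ → ℤ → ℝ) : ℝ :=
  h ^ 3 * ∑ i ∈ cellIdx N, ∑ j ∈ cellIdx N, ∑ k ∈ cellIdx N, φ i j k * ψ i j k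

/-- Zero discrete mean: `Σ_{i,j,k=1}^N φ_{ijk} = 0`. -/
def zeroMean (N : ℕ) (φ : ℤ → ℤ → ℤ → ℝ) : Prop :=
  ∑ i ∈ cellIdx N, ∑ j ∈ cellIdx N, ∑ k ∈ cellIdx N, φ i j k = 0

/-- Two cell-centered functions agree on all cells. -/
def CellEqOn (N : ℕ) (φ ψ : ℤ → ℤ → ℤ → ℝ) : Prop :=
  ∀ i ∈ cellIdx N, ∀ j ∈ cellIdx N, ∀ k ∈ cellIdx N, φ i j k = ψ i j k

/-- Discrete maximum norm over the cells. -/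
def cInf (N : ℕ) (φ : ℤ → ℤ → ℤ → ℝ) : ℝ :=
  sSup {r : ℝ | ∃ i ∈ cellIdx N, ∃ j ∈ cellIdx N, ∃ k ∈ cellIdx N, r = |φ i j k|}

/-- `D_x φ` at the x-face `(i+1/2,j,k)` (recorded at index `(i,j,k)`);
it vanishes at the boundary faces `i = 0, N` by the Neumann ghost values. -/
def Dx (N : ℕ) (h : ℝ) (φ : ℤ → ℤ → ℤ → ℝ) (i j k : ℤ) : ℝ :=
  (nExt N φ (i + 1) j k - nExt N φ i j k) / h

/-- `D_y φ` at the y-face `(i,j+1/2,k)`. -/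
def Dy (N : ℕ) (h : ℝ) (φ : ℤ → ℤ → ℤ → ℝ) (i j k : ℤ) : ℝ :=
  (nExt N φ i (j + 1) k - nExt N φ i j k) / h

/-- `D_z φ` at the z-face `(i,j,k+1/2)`. -/
def Dz (N : ℕ) (h : ℝ) (φ : ℤ → ℤ → ℤ → ℝ) (i j k : ℤ) : ℝ :=
  (nExt N φ i j (k + 1) - nExt N φ i j k) / h

/-- Cell-centered discrete Laplacian, using the Neumann ghost values. -/
def lapC (N : ℕ) (h : ℝ) (φ : ℤ → ℤ → ℤ → ℝ) (i j k : ℤ) : ℝ :=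
  (nExt N φ (i + 1) j k + nExt N φ (i - 1) j k + nExt N φ i (j + 1) k +
      nExt N φ i (j - 1) k + nExt N φ i j (k + 1) + nExt N φ i j (k - 1) -
      6 * nExt N φ i j k) / h ^ 2

/-- `‖∇_h φ‖₂²`: sum of squared differences over all interior faces. -/
def gradSq (N : ℕ) (h : ℝ) (φ : ℤ → ℤ → ℤ → ℝ) : ℝ :=
  h ^ 3 *
    ((∑ i ∈ faceIdx N, ∑ j ∈ cellIdx N, ∑ k ∈ cellIdx N, Dx N h φ i j k ^ 2) +
      (∑ i ∈ cellIdx N, ∑ j ∈ faceIdx N, ∑ k ∈ cellIdx N, Dy N h φ i j k ^ 2) +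
      (∑ i ∈ cellIdx N, ∑ j ∈ cellIdx N, ∑ k ∈ faceIdx N, Dz N h φ i j k ^ 2))

/-- Face inner product `[f,g]_x`. -/
def ipFX (N : ℕ) (h : ℝ) (f g : ℤ → ℤ → ℤ → ℝ) : ℝ :=
  h ^ 3 / 2 * ∑ i ∈ cellIdx N, ∑ j ∈ cellIdx N, ∑ k ∈ cellIdx N,
    (f i j k * g i j k + f (i - 1) j k * g (i - 1) j k)

/-- Face inner product `[f,g]_y`. -/
def ipFY (N : ℕ) (h : ℝ) (f g : ℤ → ℤ → ℤ → ℝ) : ℝ :=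
  h ^ 3 / 2 * ∑ i ∈ cellIdx N, ∑ j ∈ cellIdx N, ∑ k ∈ cellIdx N,
    (f i j k * g i j k + f i (j - 1) k * g i (j - 1) k)

/-- Face inner product `[f,g]_z`. -/
def ipFZ (N : ℕ) (h : ℝ) (f g : ℤ → ℤ → ℤ → ℝ) : ℝ :=
  h ^ 3 / 2 * ∑ i ∈ cellIdx N, ∑ j ∈ cellIdx N, ∑ k ∈ cellIdx N,
    (f i j k * g i j k + f i j (k - 1) * g i j (k - 1))

/-- MAC inner product of two vector fields. -/
def macIP (N : ℕ) (h : ℝ) (ux uy uz vx vy vz : ℤ → ℤ → ℤ → ℝ) : ℝ :=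
  ipFX N h ux vx + ipFY N h uy vy + ipFZ N h uz vz

/-- Discrete divergence at the cell `(i,j,k)`. -/
def divH (h : ℝ) (ux uy uz : ℤ → ℤ → ℤ → ℝ) (i j k : ℤ) : ℝ :=
  (ux i j k - ux (i - 1) j k + uy i j k - uy i (j - 1) k +
    uz i j k - uz i j (k - 1)) / h

/-- No-penetration boundary condition: the normal boundary face values vanish. -/
def NoPen (N : ℕ) (ux uy uz : ℤ → ℤ → ℤ → ℝ) : Prop :=
  (∀ j ∈ cellIdx N, ∀ k ∈ cellIdx N, ux 0 j k = 0 ∧ ux (N : ℤ) j k = 0) ∧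
  (∀ i ∈ cellIdx N, ∀ k ∈ cellIdx N, uy i 0 k = 0 ∧ uy i (N : ℤ) k = 0) ∧
  (∀ i ∈ cellIdx N, ∀ j ∈ cellIdx N, uz i j 0 = 0 ∧ uz i j (N : ℤ) = 0)

/-- Free-slip (reflection) extension of the x-face component in the
tangential directions. -/
def fExtX (N : ℕ) (f : ℤ → ℤ → ℤ → ℝ) (i j k : ℤ) : ℝ :=
  f i (clampIdx N j) (clampIdx N k)

/-- Free-slip extension of the y-face component. -/
def fExtY (N : ℕ) (f : ℤ → ℤ → ℤ → ℝ) (i j k : ℤ) : ℝ :=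
  f (clampIdx N i) j (clampIdx N k)

/-- Free-slip extension of the z-face component. -/
def fExtZ (N : ℕ) (f : ℤ → ℤ → ℤ → ℝ) (i j k : ℤ) : ℝ :=
  f (clampIdx N i) (clampIdx N j) k

/-- Face-centered discrete Laplacian of the x-component (seven-point stencil,
free-slip ghost values in the tangential directions). -/
def lapFX (N : ℕ) (h : ℝ) (f : ℤ → ℤ → ℤ → ℝ) (i j k : ℤ) : ℝ :=
  (fExtX N f (i + 1) j k + fExtX N f (i - 1) j k + fExtX N f i (j + 1) k +
      fExtX N f i (j - 1) k + fExtX N f i j (k + 1) + fExtX N f i j (k - 1) -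
      6 * fExtX N f i j k) / h ^ 2

/-- Face-centered discrete Laplacian of the y-component. -/
def lapFY (N : ℕ) (h : ℝ) (f : ℤ → ℤ → ℤ → ℝ) (i j k : ℤ) : ℝ :=
  (fExtY N f (i + 1) j k + fExtY N f (i - 1) j k + fExtY N f i (j + 1) k +
      fExtY N f i (j - 1) k + fExtY N f i j (k + 1) + fExtY N f i j (k - 1) -
      6 * fExtY N f i j k) / h ^ 2

/-- Face-centered discrete Laplacian of the z-component. -/
def lapFZ (N : ℕ) (h : ℝ) (f : ℤ → ℤ → ℤ → ℝ) (i j k : ℤ) : ℝ :=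
  (fExtZ N f (i + 1) j k + fExtZ N f (i - 1) j k + fExtZ N f i (j + 1) k +
      fExtZ N f i (j - 1) k + fExtZ N f i j (k + 1) + fExtZ N f i j (k - 1) -
      6 * fExtZ N f i j k) / h ^ 2

/-- Face average `A_x φ` at the x-face `(i+1/2,j,k)`. -/
def AxF (N : ℕ) (φ : ℤ → ℤ → ℤ → ℝ) (i j k : ℤ) : ℝ :=
  (nExt N φ (i + 1) j k + nExt N φ i j k) / 2

/-- Face average `A_y φ`. -/
def AyF (N : ℕ) (φ : ℤ → ℤ → ℤ → ℝ) (i j k : ℤ) : ℝ :=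
  (nExt N φ i (j + 1) k + nExt N φ i j k) / 2

/-- Face average `A_z φ`. -/
def AzF (N : ℕ) (φ : ℤ → ℤ → ℤ → ℝ) (i j k : ℤ) : ℝ :=
  (nExt N φ i j (k + 1) + nExt N φ i j k) / 2

/-! Summation by parts gives the discrete Green formula `(φ, div_h u) = -[∇_h φ, u]` for
every MAC field `u` with no penetration; with `φ = 1` it says that `div_h u` has zero mean.
The Neumann ghost values make `∇_h φ` itself such a field, and `div_h ∇_h = Δ_h`, so
`(φ, Δ_h φ) = -‖∇_h φ‖²`: a discretely harmonic `φ` has vanishing differences, hence is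
constant, hence zero if its mean is zero. This is uniqueness. For existence, the operator
`v ↦ -Δ_h v + Σ v` on cell functions is injective (summing over the cells kills the Laplacian
and forces `Σ v = 0`), hence surjective, and the same summation shows that a preimage of a
zero-mean `g` has zero sum. Finally `div_h (f + ∇_h p) = div_h f + Δ_h p = 0`. -/

section

variable {N : ℕ}

theorem mem_cellIdx {i : ℤ} : i ∈ cellIdx N ↔ 1 ≤ i ∧ i ≤ N := Finset.mem_Icc

theorem clampIdx_of_mem {i : ℤ} (hi : i ∈ cellIdx N) : clampIdx N i = i := by
  rw [mem_cellIdx] at hi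
  unfold clampIdx
  omega

theorem clampIdx_mem (hN : 0 < N) (i : ℤ) : clampIdx N i ∈ cellIdx N := by
  rw [mem_cellIdx]
  unfold clampIdx
  omega

theorem clampIdx_zero : clampIdx N 0 = clampIdx N 1 := by
  unfold clampIdx
  omega

theorem clampIdx_natCast_add_one : clampIdx N (N + 1) = clampIdx N N := by
  unfold clampIdx
  omega

theorem nExt_of_mem (φ : ℤ → ℤ → ℤ → ℝ) {i j k : ℤ} (hi : i ∈ cellIdx N)
    (hj : j ∈ cellIdx N) (hk : k ∈ cellIdx N) : nExt N φ i j k = φ i j k := by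
  rw [nExt, clampIdx_of_mem hi, clampIdx_of_mem hj, clampIdx_of_mem hk]

theorem card_cellIdx : #(cellIdx N) = N := by
  simp [cellIdx]

theorem sum_cellIdx_sub (G : ℤ → ℝ) :
    ∑ i ∈ cellIdx N, (G i - G (i - 1)) = G N - G 0 := by
  induction N with
  | zero => simp [cellIdx]
  | succ n ih =>
    rw [cellIdx, Nat.cast_succ, ← Finset.insert_Icc_right_eq_Icc_add_one (by omega),
      sum_insert (by simp), ← cellIdx, ih, add_sub_cancel_right]
    ring

theorem sum_mul_sub_eq_neg_sum (ψ u : ℤ → ℝ) (hu : u 0 = 0 ∧ u N = 0) :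
    ∑ i ∈ cellIdx N, ψ i * (u i - u (i - 1)) =
      -∑ i ∈ cellIdx N, (ψ (i + 1) - ψ i) * u i := by
  have tel := sum_cellIdx_sub (N := N) fun i => ψ (i + 1) * u i
  simp only [sub_add_cancel, zero_add, hu.1, hu.2, mul_zero, sub_zero] at tel
  rw [eq_neg_iff_add_eq_zero, ← sum_add_distrib, ← tel]
  exact sum_congr rfl fun i _ => by ring

theorem apply_eq_apply_one_of_succ_eq {c : ℤ → ℝ}
    (hc : ∀ i ∈ cellIdx N, i + 1 ∈ cellIdx N → c (i + 1) = c i) :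
    ∀ i ∈ cellIdx N, c i = c 1 := by
  intro i hi
  obtain ⟨hi1, hiN⟩ := mem_cellIdx.1 hi
  induction i, hi1 using Int.leInduction with
  | base => rfl
  | succ i hi1 ih =>
    have hi : i ∈ cellIdx N := mem_cellIdx.2 ⟨hi1, by omega⟩
    rw [hc i hi (mem_cellIdx.2 ⟨by omega, hiN⟩), ih hi (by omega)]

section SummationByParts

variable (ψ u : ℤ → ℤ → ℤ → ℝ)

theorem sum_mul_sub_x (hu : ∀ j ∈ cellIdx N, ∀ k ∈ cellIdx N, u 0 j k = 0 ∧ u N j k = 0) :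
    ∑ i ∈ cellIdx N, ∑ j ∈ cellIdx N, ∑ k ∈ cellIdx N,
        ψ i j k * (u i j k - u (i - 1) j k) =
      -∑ i ∈ cellIdx N, ∑ j ∈ cellIdx N, ∑ k ∈ cellIdx N,
        (ψ (i + 1) j k - ψ i j k) * u i j k := by
  have reorder (F : ℤ → ℤ → ℤ → ℝ) :
      ∑ i ∈ cellIdx N, ∑ j ∈ cellIdx N, ∑ k ∈ cellIdx N, F i j k =
        ∑ j ∈ cellIdx N, ∑ k ∈ cellIdx N, ∑ i ∈ cellIdx N, F i j k := by
    rw [sum_comm]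
    exact sum_congr rfl fun _ _ => sum_comm
  rw [reorder]
  conv_rhs => rw [reorder]
  rw [← sum_neg_distrib]
  refine sum_congr rfl fun j hj => ?_
  rw [← sum_neg_distrib]
  exact sum_congr rfl fun k hk =>
    sum_mul_sub_eq_neg_sum (ψ · j k) (u · j k) (hu j hj k hk)

theorem sum_mul_sub_y (hu : ∀ i ∈ cellIdx N, ∀ k ∈ cellIdx N, u i 0 k = 0 ∧ u i N k = 0) :
    ∑ i ∈ cellIdx N, ∑ j ∈ cellIdx N, ∑ k ∈ cellIdx N,
        ψ i j k * (u i j k - u i (j - 1) k) =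
      -∑ i ∈ cellIdx N, ∑ j ∈ cellIdx N, ∑ k ∈ cellIdx N,
        (ψ i (j + 1) k - ψ i j k) * u i j k := by
  rw [← sum_neg_distrib]
  refine sum_congr rfl fun i hi => ?_
  rw [sum_comm]
  conv_rhs => rw [sum_comm]
  rw [← sum_neg_distrib]
  exact sum_congr rfl fun k hk =>
    sum_mul_sub_eq_neg_sum (ψ i · k) (u i · k) (hu i hi k hk)

theorem sum_mul_sub_z (hu : ∀ i ∈ cellIdx N, ∀ j ∈ cellIdx N, u i j 0 = 0 ∧ u i j N = 0) :
    ∑ i ∈ cellIdx N, ∑ j ∈ cellIdx N, ∑ k ∈ cellIdx N,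
        ψ i j k * (u i j k - u i j (k - 1)) =
      -∑ i ∈ cellIdx N, ∑ j ∈ cellIdx N, ∑ k ∈ cellIdx N,
        (ψ i j (k + 1) - ψ i j k) * u i j k := by
  rw [← sum_neg_distrib]
  refine sum_congr rfl fun i hi => ?_
  rw [← sum_neg_distrib]
  exact sum_congr rfl fun j hj =>
    sum_mul_sub_eq_neg_sum (ψ i j ·) (u i j ·) (hu i hi j hj)

end SummationByParts

theorem sum_mul_divH {ux uy uz : ℤ → ℤ → ℤ → ℝ} (hu : NoPen N ux uy uz) (h : ℝ)
    (φ : ℤ → ℤ → ℤ → ℝ) :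
    ∑ i ∈ cellIdx N, ∑ j ∈ cellIdx N, ∑ k ∈ cellIdx N, φ i j k * divH h ux uy uz i j k =
      -∑ i ∈ cellIdx N, ∑ j ∈ cellIdx N, ∑ k ∈ cellIdx N,
        (Dx N h φ i j k * ux i j k + Dy N h φ i j k * uy i j k +
          Dz N h φ i j k * uz i j k) := by
  obtain ⟨hx, hy, hz⟩ := hu
  calc _ = (∑ i ∈ cellIdx N, ∑ j ∈ cellIdx N, ∑ k ∈ cellIdx N,
            nExt N φ i j k * (ux i j k - ux (i - 1) j k) +
          ∑ i ∈ cellIdx N, ∑ j ∈ cellIdx N, ∑ k ∈ cellIdx N,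
            nExt N φ i j k * (uy i j k - uy i (j - 1) k) +
          ∑ i ∈ cellIdx N, ∑ j ∈ cellIdx N, ∑ k ∈ cellIdx N,
            nExt N φ i j k * (uz i j k - uz i j (k - 1))) / h := by
        simp only [← sum_add_distrib, sum_div]
        refine sum_congr rfl fun i hi => sum_congr rfl fun j hj => sum_congr rfl fun k hk => ?_
        rw [divH, nExt_of_mem φ hi hj hk]
        ring
    _ = _ := by
        rw [sum_mul_sub_x _ ux hx, sum_mul_sub_y _ uy hy, sum_mul_sub_z _ uz hz]
        simp only [← sum_neg_distrib, ← sum_add_distrib, sum_div]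
        refine sum_congr rfl fun i _ => sum_congr rfl fun j _ => sum_congr rfl fun k _ => ?_
        rw [Dx, Dy, Dz]
        ring

theorem noPen_grad (h : ℝ) (φ : ℤ → ℤ → ℤ → ℝ) :
    NoPen N (Dx N h φ) (Dy N h φ) (Dz N h φ) := by
  refine ⟨fun _ _ _ _ => ⟨?_, ?_⟩, fun _ _ _ _ => ⟨?_, ?_⟩, fun _ _ _ _ => ⟨?_, ?_⟩⟩ <;>
    simp [Dx, Dy, Dz, nExt, clampIdx_zero, clampIdx_natCast_add_one]

theorem divH_grad (h : ℝ) (φ : ℤ → ℤ → ℤ → ℝ) (i j k : ℤ) :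
    divH h (Dx N h φ) (Dy N h φ) (Dz N h φ) i j k = lapC N h φ i j k := by
  simp only [divH, Dx, Dy, Dz, lapC, sub_add_cancel]
  ring

theorem divH_add (h : ℝ) (ux uy uz vx vy vz : ℤ → ℤ → ℤ → ℝ) (i j k : ℤ) :
    divH h (fun a b c => ux a b c + vx a b c) (fun a b c => uy a b c + vy a b c)
        (fun a b c => uz a b c + vz a b c) i j k =
      divH h ux uy uz i j k + divH h vx vy vz i j k := by
  simp only [divH]
  ring

theorem zeroMean_divH {ux uy uz : ℤ → ℤ → ℤ → ℝ} (hu : NoPen N ux uy uz) (h : ℝ) :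
    zeroMean N (divH h ux uy uz) := by
  simpa [zeroMean, Dx, Dy, Dz, nExt] using sum_mul_divH hu h fun _ _ _ => 1

theorem zeroMean_lapC (h : ℝ) (φ : ℤ → ℤ → ℤ → ℝ) : zeroMean N (lapC N h φ) := by
  simpa only [zeroMean, divH_grad] using zeroMean_divH (noPen_grad h φ) h

theorem sum_mul_lapC (h : ℝ) (φ : ℤ → ℤ → ℤ → ℝ) :
    ∑ i ∈ cellIdx N, ∑ j ∈ cellIdx N, ∑ k ∈ cellIdx N, φ i j k * lapC N h φ i j k =
      -∑ i ∈ cellIdx N, ∑ j ∈ cellIdx N, ∑ k ∈ cellIdx N,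
        (Dx N h φ i j k ^ 2 + Dy N h φ i j k ^ 2 + Dz N h φ i j k ^ 2) := by
  simpa only [divH_grad, ← sq] using sum_mul_divH (noPen_grad h φ) h φ

section Uniqueness

variable {h : ℝ} {φ : ℤ → ℤ → ℤ → ℝ}

theorem grad_eq_zero_of_lapC_eq_zero
    (hlap : ∀ i ∈ cellIdx N, ∀ j ∈ cellIdx N, ∀ k ∈ cellIdx N, lapC N h φ i j k = 0) :
    ∀ i ∈ cellIdx N, ∀ j ∈ cellIdx N, ∀ k ∈ cellIdx N,
      Dx N h φ i j k = 0 ∧ Dy N h φ i j k = 0 ∧ Dz N h φ i j k = 0 := by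
  have energy : ∑ i ∈ cellIdx N, ∑ j ∈ cellIdx N, ∑ k ∈ cellIdx N,
      (Dx N h φ i j k ^ 2 + Dy N h φ i j k ^ 2 + Dz N h φ i j k ^ 2) = 0 := by
    have green := sum_mul_lapC (N := N) h φ
    rw [sum_eq_zero fun i hi => sum_eq_zero fun j hj => sum_eq_zero fun k hk => by
      rw [hlap i hi j hj k hk, mul_zero]] at green
    linarith
  intro i hi j hj k hk
  have hcell := (sum_eq_zero_iff_of_nonneg fun _ _ => by positivity).1
    ((sum_eq_zero_iff_of_nonneg fun _ _ => by positivity).1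
      ((sum_eq_zero_iff_of_nonneg fun _ _ => by positivity).1 energy i hi) j hj) k hk
  have := sq_nonneg (Dx N h φ i j k)
  have := sq_nonneg (Dy N h φ i j k)
  have := sq_nonneg (Dz N h φ i j k)
  exact ⟨pow_eq_zero_iff two_ne_zero |>.1 (by linarith),
    pow_eq_zero_iff two_ne_zero |>.1 (by linarith),
    pow_eq_zero_iff two_ne_zero |>.1 (by linarith)⟩

theorem apply_eq_apply_one_of_grad_eq_zero (hh : h ≠ 0)
    (hgrad : ∀ i ∈ cellIdx N, ∀ j ∈ cellIdx N, ∀ k ∈ cellIdx N,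
      Dx N h φ i j k = 0 ∧ Dy N h φ i j k = 0 ∧ Dz N h φ i j k = 0) :
    ∀ i ∈ cellIdx N, ∀ j ∈ cellIdx N, ∀ k ∈ cellIdx N, φ i j k = φ 1 1 1 := by
  have eq_of_diff {a b : ℝ} (hab : (a - b) / h = 0) : a = b :=
    sub_eq_zero.1 ((div_eq_zero_iff.1 hab).resolve_right hh)
  intro i hi j hj k hk
  have one_mem : (1 : ℤ) ∈ cellIdx N :=
    mem_cellIdx.2 ⟨le_rfl, (mem_cellIdx.1 hi).1.trans (mem_cellIdx.1 hi).2⟩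
  calc φ i j k = φ 1 j k := by
        refine apply_eq_apply_one_of_succ_eq (c := (φ · j k)) (fun a ha ha' => ?_) i hi
        have := eq_of_diff (hgrad a ha j hj k hk).1
        rwa [nExt_of_mem φ ha' hj hk, nExt_of_mem φ ha hj hk] at this
    _ = φ 1 1 k := by
        refine apply_eq_apply_one_of_succ_eq (c := (φ 1 · k)) (fun b hb hb' => ?_) j hj
        have := eq_of_diff (hgrad 1 one_mem b hb k hk).2.1
        rwa [nExt_of_mem φ one_mem hb' hk, nExt_of_mem φ one_mem hb hk] at this
    _ = φ 1 1 1 := by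
        refine apply_eq_apply_one_of_succ_eq (c := (φ 1 1 ·)) (fun c hc hc' => ?_) k hk
        have := eq_of_diff (hgrad 1 one_mem 1 one_mem c hc).2.2
        rwa [nExt_of_mem φ one_mem one_mem hc', nExt_of_mem φ one_mem one_mem hc] at this

theorem eq_zero_of_lapC_eq_zero (hh : h ≠ 0) (hmean : zeroMean N φ)
    (hlap : ∀ i ∈ cellIdx N, ∀ j ∈ cellIdx N, ∀ k ∈ cellIdx N, lapC N h φ i j k = 0) :
    ∀ i ∈ cellIdx N, ∀ j ∈ cellIdx N, ∀ k ∈ cellIdx N, φ i j k = 0 := by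
  have hconst := apply_eq_apply_one_of_grad_eq_zero hh (grad_eq_zero_of_lapC_eq_zero hlap)
  intro i hi j hj k hk
  have hN : (N : ℝ) ≠ 0 := by
    have := mem_cellIdx.1 hi
    exact_mod_cast (show N ≠ 0 by omega)
  rw [zeroMean, sum_congr rfl fun i hi => sum_congr rfl fun j hj => sum_congr rfl fun k hk =>
    hconst i hi j hj k hk] at hmean
  simp only [sum_const, card_cellIdx, nsmul_eq_mul] at hmean
  rw [hconst i hi j hj k hk]
  simpa [hN] using hmean

theorem lapC_sub (h : ℝ) (φ ψ : ℤ → ℤ → ℤ → ℝ) (i j k : ℤ) :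
    lapC N h (φ - ψ) i j k = lapC N h φ i j k - lapC N h ψ i j k := by
  simp only [lapC, nExt, Pi.sub_apply]
  ring

theorem cellEqOn_of_lapC_eq (hh : h ≠ 0) {ψ : ℤ → ℤ → ℤ → ℝ} (hφ : zeroMean N φ)
    (hψ : zeroMean N ψ)
    (hlap : ∀ i ∈ cellIdx N, ∀ j ∈ cellIdx N, ∀ k ∈ cellIdx N,
      lapC N h φ i j k = lapC N h ψ i j k) :
    CellEqOn N φ ψ := by
  have hmean : zeroMean N (φ - ψ) := by
    simp only [zeroMean, Pi.sub_apply, sum_sub_distrib]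
    rw [hφ, hψ, sub_zero]
  intro i hi j hj k hk
  refine sub_eq_zero.1 (eq_zero_of_lapC_eq_zero hh hmean (fun a ha b hb c hc => ?_) i hi j hj k hk)
  rw [lapC_sub, hlap a ha b hb c hc, sub_self]

end Uniqueness

theorem const_eq_zero_of_neg_lapC_add_eq (hN : 0 < N) {h S : ℝ} {p g : ℤ → ℤ → ℤ → ℝ}
    (hg : zeroMean N g)
    (hpg : ∀ i ∈ cellIdx N, ∀ j ∈ cellIdx N, ∀ k ∈ cellIdx N,
      -lapC N h p i j k + S = g i j k) :
    S = 0 := by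
  have hlap : ∑ i ∈ cellIdx N, ∑ j ∈ cellIdx N, ∑ k ∈ cellIdx N, lapC N h p i j k = 0 :=
    zeroMean_lapC h p
  have total : (N : ℝ) ^ 3 * S = 0 := calc
    (N : ℝ) ^ 3 * S =
        ∑ i ∈ cellIdx N, ∑ j ∈ cellIdx N, ∑ k ∈ cellIdx N, (-lapC N h p i j k + S) := by
        simp only [sum_add_distrib, sum_neg_distrib, sum_const, card_cellIdx, nsmul_eq_mul, hlap]
        ring
    _ = 0 := by
        rw [← hg]
        exact sum_congr rfl fun i hi => sum_congr rfl fun j hj => sum_congr rfl fun k hk =>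
          hpg i hi j hj k hk
  exact (mul_eq_zero.1 total).resolve_left (by positivity)

section Existence

variable (hN : 0 < N)

def cellExtend (v : cellIdx N → cellIdx N → cellIdx N → ℝ) : ℤ → ℤ → ℤ → ℝ :=
  fun i j k => v ⟨_, clampIdx_mem hN i⟩ ⟨_, clampIdx_mem hN j⟩ ⟨_, clampIdx_mem hN k⟩

theorem cellExtend_coe (v : cellIdx N → cellIdx N → cellIdx N → ℝ) (a b c : cellIdx N) :
    cellExtend hN v a b c = v a b c := by
  simp [cellExtend, clampIdx_of_mem]

def negLapAddSum (h : ℝ) :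
    (cellIdx N → cellIdx N → cellIdx N → ℝ) →ₗ[ℝ] (cellIdx N → cellIdx N → cellIdx N → ℝ) where
  toFun v a b c := -lapC N h (cellExtend hN v) a b c +
    ∑ i ∈ cellIdx N, ∑ j ∈ cellIdx N, ∑ k ∈ cellIdx N, cellExtend hN v i j k
  map_add' u v := by
    funext a b c
    simp only [lapC, nExt, cellExtend, Pi.add_apply, sum_add_distrib]
    ring
  map_smul' r v := by
    funext a b c
    simp only [lapC, nExt, cellExtend, Pi.smul_apply, smul_eq_mul, ← mul_sum, RingHom.id_apply]
    ring

theorem negLapAddSum_apply (h : ℝ) (v : cellIdx N → cellIdx N → cellIdx N → ℝ)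
    (a b c : cellIdx N) :
    negLapAddSum hN h v a b c = -lapC N h (cellExtend hN v) a b c +
      ∑ i ∈ cellIdx N, ∑ j ∈ cellIdx N, ∑ k ∈ cellIdx N, cellExtend hN v i j k :=
  rfl

end Existence

theorem exists_zeroMean_neg_lapC_eq (hN : 0 < N) {h : ℝ} (hh : h ≠ 0) {g : ℤ → ℤ → ℤ → ℝ}
    (hg : zeroMean N g) :
    ∃ p, zeroMean N p ∧
      ∀ i ∈ cellIdx N, ∀ j ∈ cellIdx N, ∀ k ∈ cellIdx N, -lapC N h p i j k = g i j k := by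
  have eval {v w} (hv : negLapAddSum hN h v = w) (i : ℤ) (hi : i ∈ cellIdx N) (j : ℤ)
      (hj : j ∈ cellIdx N) (k : ℤ) (hk : k ∈ cellIdx N) :
      -lapC N h (cellExtend hN v) i j k +
        ∑ i ∈ cellIdx N, ∑ j ∈ cellIdx N, ∑ k ∈ cellIdx N, cellExtend hN v i j k =
      w ⟨i, hi⟩ ⟨j, hj⟩ ⟨k, hk⟩ := by
    rw [← hv, negLapAddSum_apply]
  have hinj : Function.Injective (negLapAddSum hN h) := by
    rw [← LinearMap.ker_eq_bot, LinearMap.ker_eq_bot']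
    intro v hv
    have hmean : zeroMean N (cellExtend hN v) :=
      const_eq_zero_of_neg_lapC_add_eq hN (g := 0) (by simp [zeroMean]) (eval hv)
    have hzero := eq_zero_of_lapC_eq_zero hh hmean fun i hi j hj k hk => by
      simpa [show _ = (0 : ℝ) from hmean] using eval hv i hi j hj k hk
    funext a b c
    rw [← cellExtend_coe hN v]
    exact hzero _ a.2 _ b.2 _ c.2
  obtain ⟨v, hv⟩ := LinearMap.injective_iff_surjective.1 hinj fun a b c => g a b c
  have hmean : zeroMean N (cellExtend hN v) :=
    const_eq_zero_of_neg_lapC_add_eq hN hg (eval hv)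
  refine ⟨cellExtend hN v, hmean, fun i hi j hj k hk => ?_⟩
  simpa [show _ = (0 : ℝ) from hmean] using eval hv i hi j hj k hk

end

/-- discrete Neumann Poisson problem and Helmholtz
projection: every zero-mean cell-centered `g` admits a unique zero-mean
cell-centered solution `p` of `-Δ_h p = g` on the cells; moreover for every
MAC field `f` with no-penetration boundary conditions, `div_h f` has zero
mean, and with `p` the zero-mean solution of `-Δ_h p = div_h f`, the discrete
Helmholtz projection `P_H^h f = f + ∇_h p` is discretely divergence-free. -/
theorem discrete_helmholtz (L : ℝ) (hL : 0 < L) (N : ℕ) (hN : 0 < N) :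
    (∀ g : ℤ → ℤ → ℤ → ℝ, zeroMean N g →
      ∃ p : ℤ → ℤ → ℤ → ℝ,
        (zeroMean N p ∧
          ∀ i ∈ cellIdx N, ∀ j ∈ cellIdx N, ∀ k ∈ cellIdx N,
            -lapC N (L / N) p i j k = g i j k) ∧
        ∀ q : ℤ → ℤ → ℤ → ℝ, zeroMean N q →
          (∀ i ∈ cellIdx N, ∀ j ∈ cellIdx N, ∀ k ∈ cellIdx N,
            -lapC N (L / N) q i j k = g i j k) →
          CellEqOn N q p) ∧
    (∀ fx fy fz : ℤ → ℤ → ℤ → ℝ, NoPen N fx fy fz →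
      zeroMean N (divH (L / N) fx fy fz) ∧
      ∀ p : ℤ → ℤ → ℤ → ℝ, zeroMean N p →
        (∀ i ∈ cellIdx N, ∀ j ∈ cellIdx N, ∀ k ∈ cellIdx N,
          -lapC N (L / N) p i j k = divH (L / N) fx fy fz i j k) →
        ∀ i ∈ cellIdx N, ∀ j ∈ cellIdx N, ∀ k ∈ cellIdx N,
          divH (L / N) (fun a b c => fx a b c + Dx N (L / N) p a b c)
            (fun a b c => fy a b c + Dy N (L / N) p a b c)
            (fun a b c => fz a b c + Dz N (L / N) p a b c) i j k = 0) := by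
  have hh : L / N ≠ 0 := (div_pos hL (Nat.cast_pos.2 hN)).ne'
  refine ⟨fun g hg => ?_, fun fx fy fz hf => ⟨zeroMean_divH hf _, ?_⟩⟩
  · obtain ⟨p, hp, hpg⟩ := exists_zeroMean_neg_lapC_eq hN hh hg
    refine ⟨p, ⟨hp, hpg⟩, fun q hq hqg => cellEqOn_of_lapC_eq hh hq hp fun i hi j hj k hk => ?_⟩
    rw [← neg_inj, hqg i hi j hj k hk, hpg i hi j hj k hk]
  · intro p _ hp i hi j hj k hk
    rw [divH_add, divH_grad, ← hp i hi j hj k hk, neg_add_cancel]
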